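/- arXiv:1512.04790 — 2 statements merged into one kernel-verified Lean document; each statement's English description precedes it below -/
import Mathlib

section
/- Let 0 < p ≤ 2. There is a constant C_p > 0, depending only on p, such that for every f = (f_{IJ}) ∈ H^p(δ²) and every finite family φ^{(1)}, …, φ^{(m)} of bounded real sequences indexed by the dyadic rectangles, (∑_{i=1}^m ‖∑_{I×J} φ^{(i)}_{IJ} f_{IJ} h_{I×J}‖_{H^p(δ²)}²)^{1/2} ≤ C_p · ‖f‖_{H^p(δ²)} · sup_{I×J} (∑_{i=1}^m (φ^{(i)}_{IJ})²)^{1/2}. In other words, the multiplication operator φ ↦ ∑_{I×J} φ_{IJ} f_{IJ} h_{I×J} from ℓ∞ (indexed by the dyadic rectangles) to H^p(δ²) is 2-summing with 2-summing norm at most C_p‖f‖_{H^p(δ²)}. -/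
open MeasureTheory Set
open scoped ENNReal

/-- A dyadic interval `[k/2^n, (k+1)/2^n) ⊆ [0,1)`. -/
structure DyadicInterval where
  n : ℕ
  k : ℕ
  hk : k < 2 ^ n

namespace DyadicInterval

/-- Left endpoint. -/
noncomputable def left (I : DyadicInterval) : ℝ := I.k / 2 ^ I.n

/-- Right endpoint. -/
noncomputable def right (I : DyadicInterval) : ℝ := (I.k + 1) / 2 ^ I.n

/-- Midpoint. -/
noncomputable def mid (I : DyadicInterval) : ℝ := (I.k + 1 / 2) / 2 ^ I.n

/-- The underlying point set of the dyadic interval. -/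
noncomputable def set (I : DyadicInterval) : Set ℝ := Set.Ico I.left I.right

/-- The length `|I| = 2^{-n}`. -/
noncomputable def len (I : DyadicInterval) : ℝ := 1 / 2 ^ I.n

/-- The `L^∞`-normalised Haar function `h_I`: `+1` on the left half of `I`,
`-1` on the right half of `I`, `0` elsewhere. -/
noncomputable def haar (I : DyadicInterval) (s : ℝ) : ℝ :=
  if s ∈ Set.Ico I.left I.mid then 1
  else if s ∈ Set.Ico I.mid I.right then -1
  else 0

end DyadicInterval

/-- A dyadic rectangle `I × J`. -/
abbrev DyadicRect := DyadicInterval × DyadicInterval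

namespace DyadicRect

/-- The underlying point set of the dyadic rectangle. -/
noncomputable def set (R : DyadicRect) : Set (ℝ × ℝ) := R.1.set ×ˢ R.2.set

/-- The area `|I||J|`. -/
noncomputable def area (R : DyadicRect) : ℝ := R.1.len * R.2.len

/-- The 2D Haar function `h_{I×J}(s,t) = h_I(s) h_J(t)`. -/
noncomputable def haar (R : DyadicRect) (x : ℝ × ℝ) : ℝ := R.1.haar x.1 * R.2.haar x.2

end DyadicRect

/-- The unit square `[0,1]²`. -/
noncomputable def unitSq : Set (ℝ × ℝ) := Set.Icc (0:ℝ) 1 ×ˢ Set.Icc (0:ℝ) 1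

/-- The square function `S(f)(s,t) = (∑_{I×J} f_{I×J}² 1_{I×J}(s,t))^{1/2}`,
valued in `ℝ≥0∞`. -/
noncomputable def sqS (f : DyadicRect → ℝ) (x : ℝ × ℝ) : ℝ≥0∞ :=
  (∑' R : DyadicRect, Set.indicator R.set (fun _ => ENNReal.ofReal (f R ^ 2)) x) ^ (1/2 : ℝ)

/-- The `H^p(δ²)` quasi-norm `‖f‖_{H^p} = (∫_{[0,1]²} S(f)^p dm)^{1/p}`, valued in `ℝ≥0∞`.
Membership `f ∈ H^p(δ²)` is expressed as `Hnorm p f ≠ ∞`. -/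
noncomputable def Hnorm (p : ℝ) (f : DyadicRect → ℝ) : ℝ≥0∞ :=
  (∫⁻ x in unitSq, sqS f x ^ p) ^ (1/p)

/-- `‖f‖₂ = ‖f‖_{H²(δ²)} = (∑_{I×J} f_{I×J}² |I||J|)^{1/2}`. -/
noncomputable def l2norm (f : DyadicRect → ℝ) : ℝ≥0∞ :=
  (∑' R : DyadicRect, ENNReal.ofReal (f R ^ 2) * ENNReal.ofReal R.area) ^ (1/2 : ℝ)

/-- The level set `F_n = {(s,t) ∈ [0,1]² : S(f)(s,t) > 2^n}`. -/
noncomputable def Fset (f : DyadicRect → ℝ) (n : ℤ) : Set (ℝ × ℝ) :=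
  {x ∈ unitSq | (2 : ℝ≥0∞) ^ (n : ℝ) < sqS f x}

/-- The collection `R_n` of dyadic rectangles `I×J` with
`|(I×J) ∩ F_n| > |I×J|/2` and `|(I×J) ∩ F_{n+1}| ≤ |I×J|/2`. -/
noncomputable def Rcoll (f : DyadicRect → ℝ) (n : ℤ) : Set DyadicRect :=
  {R | ENNReal.ofReal R.area / 2 < volume (R.set ∩ Fset f n) ∧
       volume (R.set ∩ Fset f (n + 1)) ≤ ENNReal.ofReal R.area / 2}

/-- The atom `f_n = ∑_{I×J ∈ R_n} f_{I×J} h_{I×J}`, i.e. the coefficient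
sequence of `f` restricted to `R_n`. -/
noncomputable def fAtom (f : DyadicRect → ℝ) (n : ℤ) : DyadicRect → ℝ :=
  (Rcoll f n).indicator f

/-- The point set `R_n* = ⋃_{I×J ∈ R_n} I×J`. -/
noncomputable def RcollStar (f : DyadicRect → ℝ) (n : ℤ) : Set (ℝ × ℝ) :=
  ⋃ R ∈ Rcoll f n, R.set


/-!
Write `σ = S(f)²` and `σᵢ = S(φ⁽ⁱ⁾f)²`. Pointwise `∑ᵢ σᵢ ≤ K σ` with
`K = sup_{I×J} ∑ᵢ (φ⁽ⁱ⁾_{IJ})²`, and `‖g‖²_{H^p(δ²)} = (∫ S(g)^{2q})^{1/q}` with `q = p/2 ≤ 1`.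
So the claim holds with `C_p = 1` by the reverse Minkowski inequality
`∑ᵢ (∫ σᵢ^q)^{1/q} ≤ (∫ (∑ᵢ σᵢ)^q)^{1/q}` for `0 < q ≤ 1`, which follows by summing the Hölder
inequalities (exponents `1/q` and `1/(1-q)`) for `σᵢ^q = (σᵢ τ^{q-1})^q (τ^q)^{1-q}`, `τ = ∑ᵢ σᵢ`.
-/

namespace ENNReal

variable {α : Type*} [MeasurableSpace α] {μ : Measure α} {q : ℝ}

theorem rpow_eq_mul_rpow_sub_one_rpow_mul_rpow {a b : ℝ≥0∞} (hq : 0 < q) (hab : a ≤ b)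
    (hb : b ≠ ∞) : a ^ q = (a * b ^ (q - 1)) ^ q * (b ^ q) ^ (1 - q) := by
  rcases eq_or_ne b 0 with rfl | hb0
  · rw [nonpos_iff_eq_zero.mp hab, zero_mul, zero_rpow_of_pos hq, zero_mul]
  · rw [mul_rpow_of_nonneg _ _ hq.le, ← rpow_mul, ← rpow_mul, mul_assoc, ← rpow_add _ _ hb0 hb,
      show (q - 1) * q + q * (1 - q) = 0 by ring, rpow_zero, mul_one]

theorem mul_rpow_sub_one_le_rpow (a : ℝ≥0∞) (hq : 0 < q) : a * a ^ (q - 1) ≤ a ^ q := by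
  rcases eq_or_ne a 0 with rfl | ha0
  · simp
  rcases eq_or_ne a ∞ with rfl | hatop
  · simp [top_rpow_of_pos hq]
  · conv_rhs => rw [← add_sub_cancel 1 q, rpow_add _ _ ha0 hatop, rpow_one]

theorem lintegral_rpow_le_of_le {f g : α → ℝ≥0∞} (hq0 : 0 < q) (hq1 : q ≤ 1)
    (hf : AEMeasurable f μ) (hg : AEMeasurable g μ) (hfg : f ≤ g) (hg_top : ∀ᵐ a ∂μ, g a ≠ ∞) :
    ∫⁻ a, f a ^ q ∂μ ≤ (∫⁻ a, f a * g a ^ (q - 1) ∂μ) ^ q * (∫⁻ a, g a ^ q ∂μ) ^ (1 - q) :=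
  calc ∫⁻ a, f a ^ q ∂μ = ∫⁻ a, (f a * g a ^ (q - 1)) ^ q * (g a ^ q) ^ (1 - q) ∂μ :=
        lintegral_congr_ae <| hg_top.mono fun a ha =>
          rpow_eq_mul_rpow_sub_one_rpow_mul_rpow hq0 (hfg a) ha
    _ ≤ _ := lintegral_mul_norm_pow_le (hf.mul (hg.pow_const _)) (hg.pow_const _) hq0.le
        (by linarith) (by ring)

theorem sum_lintegral_Lp_le_lintegral_Lp_sum {ι : Type*} (s : Finset ι) {f : ι → α → ℝ≥0∞}
    (hf : ∀ i ∈ s, AEMeasurable (f i) μ) (hq0 : 0 < q) (hq1 : q ≤ 1) :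
    ∑ i ∈ s, (∫⁻ a, f i a ^ q ∂μ) ^ (1 / q) ≤ (∫⁻ a, (∑ i ∈ s, f i a) ^ q ∂μ) ^ (1 / q) := by
  set g := fun a => ∑ i ∈ s, f i a
  have hg : AEMeasurable g μ := Finset.aemeasurable_fun_sum s hf
  set B := ∫⁻ a, g a ^ q ∂μ
  rcases eq_or_ne B ∞ with hB | hB
  · rw [hB, top_rpow_of_pos (by positivity)]
    exact le_top
  have hg_top : ∀ᵐ a ∂μ, g a ≠ ∞ := (ae_lt_top' (hg.pow_const q) hB).mono fun a ha hga => by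
    rw [hga, top_rpow_of_pos hq0] at ha
    exact lt_irrefl _ ha
  have holder : ∀ i ∈ s, (∫⁻ a, f i a ^ q ∂μ) ^ (1 / q) ≤
      (∫⁻ a, f i a * g a ^ (q - 1) ∂μ) * B ^ ((1 - q) / q) := fun i hi =>
    calc (∫⁻ a, f i a ^ q ∂μ) ^ (1 / q)
        ≤ ((∫⁻ a, f i a * g a ^ (q - 1) ∂μ) ^ q * B ^ (1 - q)) ^ (1 / q) :=
          rpow_le_rpow (lintegral_rpow_le_of_le hq0 hq1 (hf i hi) hg
            (fun a => Finset.single_le_sum (f := fun j => f j a) (fun j _ => zero_le) hi) hg_top) (by positivity)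
      _ = (∫⁻ a, f i a * g a ^ (q - 1) ∂μ) * B ^ ((1 - q) / q) := by
        rw [mul_rpow_of_nonneg _ _ (by positivity), ← rpow_mul, ← rpow_mul,
          mul_one_div_cancel hq0.ne', rpow_one, mul_one_div]
  calc ∑ i ∈ s, (∫⁻ a, f i a ^ q ∂μ) ^ (1 / q)
      ≤ ∑ i ∈ s, (∫⁻ a, f i a * g a ^ (q - 1) ∂μ) * B ^ ((1 - q) / q) :=
        Finset.sum_le_sum holder
    _ = (∫⁻ a, g a * g a ^ (q - 1) ∂μ) * B ^ ((1 - q) / q) := by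
        rw [← Finset.sum_mul,
          ← lintegral_finsetSum' (f := fun i a => f i a * g a ^ (q - 1)) _
            fun i hi => (hf i hi).mul (hg.pow_const _)]
        simp only [g, Finset.sum_mul]
    _ ≤ B ^ (1 : ℝ) * B ^ ((1 - q) / q) := by
        rw [rpow_one]
        gcongr
        exact lintegral_mono fun a => mul_rpow_sub_one_le_rpow _ hq0
    _ = B ^ (1 / q) := by
        rw [← rpow_add_of_nonneg _ _ zero_le_one (div_nonneg (by linarith) hq0.le)]
        congr 1
        field_simp
        ring

theorem lintegral_Lp_const_mul (c : ℝ≥0∞) {g : α → ℝ≥0∞} (hg : AEMeasurable g μ) (hq : 0 < q) :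
    (∫⁻ a, (c * g a) ^ q ∂μ) ^ (1 / q) = c * (∫⁻ a, g a ^ q ∂μ) ^ (1 / q) := by
  simp_rw [mul_rpow_of_nonneg _ _ hq.le]
  rw [lintegral_const_mul'' _ (hg.pow_const q), mul_rpow_of_nonneg _ _ (by positivity),
    ← rpow_mul, mul_one_div_cancel hq.ne', rpow_one]

end ENNReal

instance : Countable DyadicInterval :=
  Function.Injective.countable (f := fun I : DyadicInterval => (I.n, I.k))
    fun I J h => by cases I; cases J; simpa using h

theorem DyadicRect.measurableSet_set (R : DyadicRect) : MeasurableSet R.set :=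
  measurableSet_Ico.prod measurableSet_Ico

noncomputable def sqSSq (f : DyadicRect → ℝ) (x : ℝ × ℝ) : ℝ≥0∞ :=
  ∑' R : DyadicRect, R.set.indicator (fun _ => ENNReal.ofReal (f R ^ 2)) x

theorem measurable_sqSSq (f : DyadicRect → ℝ) : Measurable (sqSSq f) :=
  Measurable.tsum fun R => measurable_const.indicator R.measurableSet_set

theorem Hnorm_rpow_two (p : ℝ) (f : DyadicRect → ℝ) :
    Hnorm p f ^ (2 : ℝ) = (∫⁻ x in unitSq, sqSSq f x ^ (p / 2)) ^ (1 / (p / 2)) := by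
  have hS : ∀ x, sqS f x ^ p = sqSSq f x ^ (p / 2) := fun x => by
    rw [sqS, ← ENNReal.rpow_mul, one_div_mul_eq_div, sqSSq]
  simp_rw [Hnorm, hS, ← ENNReal.rpow_mul]
  congr 1
  ring

theorem sum_sqSSq_mul_le {ι : Type*} [Fintype ι] (f : DyadicRect → ℝ) (φ : ι → DyadicRect → ℝ)
    (x : ℝ × ℝ) :
    ∑ i, sqSSq (fun R => φ i R * f R) x ≤
      (⨆ R : DyadicRect, ENNReal.ofReal (∑ i, φ i R ^ 2)) * sqSSq f x := by
  set K := ⨆ R : DyadicRect, ENNReal.ofReal (∑ i, φ i R ^ 2)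
  have hR : ∀ R : DyadicRect,
      ∑ i, ENNReal.ofReal ((φ i R * f R) ^ 2) ≤ K * ENNReal.ofReal (f R ^ 2) := fun R => by
    rw [← ENNReal.ofReal_sum_of_nonneg fun i _ => sq_nonneg _]
    simp_rw [mul_pow, ← Finset.sum_mul]
    rw [ENNReal.ofReal_mul (Finset.sum_nonneg fun i _ => sq_nonneg _)]
    exact mul_le_mul_left (le_iSup (fun R => ENNReal.ofReal (∑ i, φ i R ^ 2)) R) _
  simp only [sqSSq]
  rw [← Summable.tsum_finsetSum fun _ _ => ENNReal.summable, ← ENNReal.tsum_mul_left]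
  refine ENNReal.tsum_le_tsum fun R => ?_
  by_cases hx : x ∈ R.set
  · simpa only [indicator_of_mem hx] using hR R
  · simp [indicator_of_notMem hx]

/-- the multiplication operator `M_f : ℓ∞ → H^p(δ²)` is 2-summing
with 2-summing norm at most `C_p ‖f‖_{H^p(δ²)}`. -/
theorem mult_operator_two_summing (p : ℝ) (hp0 : 0 < p) (hp2 : p ≤ 2) :
    ∃ C : ℝ, 0 < C ∧
      ∀ f : DyadicRect → ℝ, Hnorm p f ≠ ∞ →
        ∀ (m : ℕ) (φ : Fin m → DyadicRect → ℝ),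
          (∀ i, ∃ M : ℝ, ∀ R, |φ i R| ≤ M) →
          (∑ i : Fin m, Hnorm p (fun R => φ i R * f R) ^ (2:ℝ)) ^ (1/2 : ℝ) ≤
            ENNReal.ofReal C * Hnorm p f *
              (⨆ R : DyadicRect, ENNReal.ofReal (∑ i : Fin m, φ i R ^ 2)) ^ (1/2 : ℝ) := by
  refine ⟨1, one_pos, fun f _ m φ _ => ?_⟩
  set K := ⨆ R : DyadicRect, ENNReal.ofReal (∑ i : Fin m, φ i R ^ 2)
  have hq : 0 < p / 2 := by positivity
  have hsq : ∑ i, Hnorm p (fun R => φ i R * f R) ^ (2 : ℝ) ≤ K * Hnorm p f ^ (2 : ℝ) := by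
    simp only [Hnorm_rpow_two]
    calc ∑ i, (∫⁻ x in unitSq, sqSSq (fun R => φ i R * f R) x ^ (p / 2)) ^ (1 / (p / 2))
        ≤ (∫⁻ x in unitSq, (∑ i, sqSSq (fun R => φ i R * f R) x) ^ (p / 2)) ^ (1 / (p / 2)) :=
          ENNReal.sum_lintegral_Lp_le_lintegral_Lp_sum _
            (fun i _ => (measurable_sqSSq _).aemeasurable) hq (by linarith)
      _ ≤ (∫⁻ x in unitSq, (K * sqSSq f x) ^ (p / 2)) ^ (1 / (p / 2)) := by
          gcongr with x
          exact sum_sqSSq_mul_le f φ x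
      _ = K * (∫⁻ x in unitSq, sqSSq f x ^ (p / 2)) ^ (1 / (p / 2)) :=
          ENNReal.lintegral_Lp_const_mul K (measurable_sqSSq f).aemeasurable hq
  calc (∑ i, Hnorm p (fun R => φ i R * f R) ^ (2 : ℝ)) ^ (1 / 2 : ℝ)
      ≤ (K * Hnorm p f ^ (2 : ℝ)) ^ (1 / 2 : ℝ) := ENNReal.rpow_le_rpow hsq (by norm_num)
    _ = ENNReal.ofReal 1 * Hnorm p f * K ^ (1 / 2 : ℝ) := by
        rw [ENNReal.mul_rpow_of_nonneg _ _ (by norm_num), ← ENNReal.rpow_mul,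
          ENNReal.ofReal_one, one_mul, mul_comm]
        norm_num
end

section
/- Let 0 < p ≤ 2, 0 < θ < 1, and let q be defined by 1/q = (1−θ)/p + θ/2. Then for every f = (f_{IJ}) ∈ H^p(δ²) and every g = (g_{IJ}) ∈ H²(δ²): ‖∑_{I×J} |f_{IJ}|^{1−θ}|g_{IJ}|^{θ} h_{I×J}‖_{H^q(δ²)} ≤ ‖f‖_{H^p(δ²)}^{1−θ} · ‖g‖₂^{θ}. -/
open MeasureTheory Set
open scoped ENNReal

/-
Pointwise, Hölder's inequality for series with weights `1 - θ` and `θ` gives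
`S(|f|^{1-θ} |g|^θ) ≤ S(f)^{1-θ} S(g)^θ`. Raising this to the power `q` and applying Hölder's
inequality on `[0,1]²` with weights `(1-θ)q/p` and `θq/2`, which sum to `1` exactly by the choice
of `q`, bounds the `H^q` norm by `‖f‖_{H^p}^{1-θ} ‖g‖_{H^2}^θ`. Finally `∫ S(g)² = ∑ g_{IJ}² |I×J|`,
so `‖g‖_{H^2} ≤ ‖g‖₂`.
-/

theorem ENNReal.tsum_rpow_mul_rpow_le {ι : Type*} (a b : ι → ℝ≥0∞) {α β : ℝ}
    (hα : 0 ≤ α) (hβ : 0 ≤ β) (hαβ : α + β = 1) :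
    ∑' i, a i ^ α * b i ^ β ≤ (∑' i, a i) ^ α * (∑' i, b i) ^ β := by
  let _ : MeasurableSpace ι := ⊤
  simpa only [lintegral_count] using ENNReal.lintegral_mul_norm_pow_le (μ := Measure.count (α := ι))
    measurable_from_top.aemeasurable measurable_from_top.aemeasurable hα hβ hαβ

instance inst_s9 : Countable DyadicInterval :=
  (Function.Injective.countable (f := fun I : DyadicInterval => (I.n, I.k))) <| by
    rintro ⟨n, k, _⟩ ⟨n', k', _⟩ h
    simp_all

theorem DyadicInterval.volume_set (I : DyadicInterval) : volume I.set = ENNReal.ofReal I.len := by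
  rw [DyadicInterval.set, Real.volume_Ico, DyadicInterval.right, DyadicInterval.left,
    DyadicInterval.len]
  ring_nf

theorem DyadicRect.volume_set (R : DyadicRect) : volume R.set = ENNReal.ofReal R.area := by
  rw [DyadicRect.set, Measure.volume_eq_prod, Measure.prod_prod, DyadicInterval.volume_set,
    DyadicInterval.volume_set, DyadicRect.area, ← ENNReal.ofReal_mul (by simp [DyadicInterval.len])]

theorem measurable_sqS (f : DyadicRect → ℝ) : Measurable (sqS f) :=
  (Measurable.tsum fun R => measurable_const.indicator R.measurableSet_set).pow_const _

theorem sqS_rpow_two (f : DyadicRect → ℝ) (x : ℝ × ℝ) :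
    sqS f x ^ (2 : ℝ) =
      ∑' R : DyadicRect, R.set.indicator (fun _ => ENNReal.ofReal (f R ^ 2)) x := by
  rw [sqS, ← ENNReal.rpow_mul]
  norm_num

theorem lintegral_sqS_rpow_two (f : DyadicRect → ℝ) :
    ∫⁻ x, sqS f x ^ (2 : ℝ) =
      ∑' R : DyadicRect, ENNReal.ofReal (f R ^ 2) * ENNReal.ofReal R.area := by
  simp_rw [sqS_rpow_two]
  rw [lintegral_tsum fun R => (measurable_const.indicator R.measurableSet_set).aemeasurable]
  refine tsum_congr fun R => ?_
  rw [lintegral_indicator_const R.measurableSet_set, R.volume_set]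

theorem Hnorm_two_le_l2norm (f : DyadicRect → ℝ) : Hnorm 2 f ≤ l2norm f := by
  calc Hnorm 2 f ≤ (∫⁻ x, sqS f x ^ (2 : ℝ)) ^ (1 / 2 : ℝ) :=
        ENNReal.rpow_le_rpow (setLIntegral_le_lintegral _ _) (by norm_num)
    _ = l2norm f := by rw [lintegral_sqS_rpow_two, l2norm]

theorem abs_rpow_sq (c e : ℝ) : (|c| ^ e) ^ 2 = (c ^ 2) ^ e := by
  rw [← Real.rpow_natCast, ← Real.rpow_mul (abs_nonneg c), mul_comm, Real.rpow_mul (abs_nonneg c),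
    Real.rpow_natCast, sq_abs]

theorem sqS_abs_rpow_mul_abs_rpow_le (f g : DyadicRect → ℝ) {α β : ℝ} (hα : 0 ≤ α) (hβ : 0 ≤ β)
    (hαβ : α + β = 1) (x : ℝ × ℝ) :
    sqS (fun R => |f R| ^ α * |g R| ^ β) x ≤ sqS f x ^ α * sqS g x ^ β := by
  set a : DyadicRect → ℝ≥0∞ := fun R => R.set.indicator (fun _ => ENNReal.ofReal (f R ^ 2)) x
  set b : DyadicRect → ℝ≥0∞ := fun R => R.set.indicator (fun _ => ENNReal.ofReal (g R ^ 2)) x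
  have hterm : ∀ R : DyadicRect,
      R.set.indicator (fun _ => ENNReal.ofReal ((|f R| ^ α * |g R| ^ β) ^ 2)) x
        = a R ^ α * b R ^ β := by
    intro R
    by_cases hx : x ∈ R.set
    · simp only [a, b, indicator_of_mem hx]
      rw [mul_pow, abs_rpow_sq, abs_rpow_sq,
        ENNReal.ofReal_mul (Real.rpow_nonneg (sq_nonneg _) _),
        ENNReal.ofReal_rpow_of_nonneg (sq_nonneg _) hα,
        ENNReal.ofReal_rpow_of_nonneg (sq_nonneg _) hβ]
    · simp only [a, b, indicator_of_notMem hx]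
      -- `0 ^ 0 = 1` in `ℝ≥0∞`, so we need one of the exponents to be positive.
      rcases hα.eq_or_lt with rfl | hα_pos
      · simp [ENNReal.zero_rpow_of_pos (by linarith : (0 : ℝ) < β)]
      · simp [ENNReal.zero_rpow_of_pos hα_pos]
  calc sqS (fun R => |f R| ^ α * |g R| ^ β) x
      = (∑' R, a R ^ α * b R ^ β) ^ (1 / 2 : ℝ) := by rw [sqS, tsum_congr hterm]
    _ ≤ ((∑' R, a R) ^ α * (∑' R, b R) ^ β) ^ (1 / 2 : ℝ) :=
        ENNReal.rpow_le_rpow (ENNReal.tsum_rpow_mul_rpow_le a b hα hβ hαβ) (by norm_num)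
    _ = sqS f x ^ α * sqS g x ^ β := by
        rw [ENNReal.mul_rpow_of_nonneg _ _ (by norm_num), sqS, sqS, ← ENNReal.rpow_mul,
          ← ENNReal.rpow_mul, ← ENNReal.rpow_mul, ← ENNReal.rpow_mul, mul_comm α, mul_comm β]

theorem Hnorm_abs_rpow_mul_abs_rpow_le {p r q θ : ℝ} (hp : 0 < p) (hr : 0 < r) (hθ0 : 0 ≤ θ)
    (hθ1 : θ ≤ 1) (hq : 1 / q = (1 - θ) / p + θ / r) (f g : DyadicRect → ℝ) :
    Hnorm q (fun R => |f R| ^ (1 - θ) * |g R| ^ θ) ≤ Hnorm p f ^ (1 - θ) * Hnorm r g ^ θ := by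
  have hq0 : 0 < q := by
    refine one_div_pos.mp (hq ▸ ?_)
    rcases hθ0.eq_or_lt with rfl | hθ_pos
    · simpa using hp
    · have := div_nonneg (sub_nonneg.2 hθ1) hp.le
      have := div_pos hθ_pos hr
      linarith
  set a := (1 - θ) * q / p
  set b := θ * q / r
  have ha : 0 ≤ a := by have := sub_nonneg.2 hθ1; positivity
  have hb : 0 ≤ b := by positivity
  have hab : a + b = 1 := by
    rw [show a + b = q * ((1 - θ) / p + θ / r) by ring, ← hq]
    field_simp
  have hpoint : ∀ x, sqS (fun R => |f R| ^ (1 - θ) * |g R| ^ θ) x ^ q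
      ≤ (sqS f x ^ p) ^ a * (sqS g x ^ r) ^ b := fun x => by
    calc _ ≤ (sqS f x ^ (1 - θ) * sqS g x ^ θ) ^ q :=
          ENNReal.rpow_le_rpow
            (sqS_abs_rpow_mul_abs_rpow_le f g (sub_nonneg.2 hθ1) hθ0 (by ring) x) hq0.le
      _ = _ := by
          rw [ENNReal.mul_rpow_of_nonneg _ _ hq0.le]
          simp only [← ENNReal.rpow_mul]
          congr 2 <;> simp only [a, b] <;> field_simp
  have hholder : ∫⁻ x in unitSq, sqS (fun R => |f R| ^ (1 - θ) * |g R| ^ θ) x ^ q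
      ≤ (∫⁻ x in unitSq, sqS f x ^ p) ^ a * (∫⁻ x in unitSq, sqS g x ^ r) ^ b :=
    (lintegral_mono hpoint).trans <| ENNReal.lintegral_mul_norm_pow_le
      ((measurable_sqS f).pow_const p).aemeasurable ((measurable_sqS g).pow_const r).aemeasurable
      ha hb hab
  calc _ ≤ ((∫⁻ x in unitSq, sqS f x ^ p) ^ a * (∫⁻ x in unitSq, sqS g x ^ r) ^ b) ^ (1 / q) :=
        ENNReal.rpow_le_rpow hholder (by positivity)
    _ = Hnorm p f ^ (1 - θ) * Hnorm r g ^ θ := by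
        rw [ENNReal.mul_rpow_of_nonneg _ _ (by positivity), Hnorm, Hnorm]
        simp only [← ENNReal.rpow_mul]
        congr 2 <;> simp only [a, b] <;> field_simp

theorem interpolation_upper_general (p θ q : ℝ) (hp0 : 0 < p)
    (hθ0 : 0 < θ) (hθ1 : θ < 1) (hq : 1/q = (1-θ)/p + θ/2)
    (f g : DyadicRect → ℝ) :
    Hnorm q (fun R => |f R| ^ (1-θ) * |g R| ^ θ) ≤
      Hnorm p f ^ (1-θ) * l2norm g ^ θ := by
  calc _ ≤ Hnorm p f ^ (1 - θ) * Hnorm 2 g ^ θ :=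
        Hnorm_abs_rpow_mul_abs_rpow_le hp0 two_pos hθ0.le hθ1.le hq f g
    _ ≤ Hnorm p f ^ (1 - θ) * l2norm g ^ θ := by
        gcongr
        exact Hnorm_two_le_l2norm g

/-- the right-hand inequality of Theorem 4.1:
`‖∑ |f_{IJ}|^{1-θ}|g_{IJ}|^θ h_{I×J}‖_{H^q} ≤ ‖f‖_{H^p}^{1-θ} ‖g‖₂^θ`. -/
theorem interpolation_upper (p θ q : ℝ) (hp0 : 0 < p) (hp2 : p ≤ 2)
    (hθ0 : 0 < θ) (hθ1 : θ < 1) (hq : 1/q = (1-θ)/p + θ/2)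
    (f g : DyadicRect → ℝ) (hf : Hnorm p f ≠ ∞) (hg : l2norm g ≠ ∞) :
    Hnorm q (fun R => |f R| ^ (1-θ) * |g R| ^ θ) ≤
      Hnorm p f ^ (1-θ) * l2norm g ^ θ :=
  interpolation_upper_general p θ q hp0 hθ0 hθ1 hq f g
end
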